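/- arXiv:2507.16997 — 2 statements merged into one kernel-verified Lean document; each statement's English description precedes it below -/
import Mathlib

section
/- Let H₁, H₂ be continuous strictly increasing CDFs on [c̲, c̄] with H₁(c) < H₂(c) for all c in (c̲, c̄), and let c̃₁, c̃₂ be the respective unique solutions of G(γH_i(c)β^e/(γH_i(c) + 1−γ)) = α_G − c (under the assumptions guaranteeing unique interior solutions). Then c̃₂ < c̃₁ and H₂(c̃₂) > H₁(c̃₁). -/
/-- a FOSD decrease in concealment costs (H₁ < H₂ pointwise on
the interior) lowers the equilibrium threshold but raises the equilibrium
concealment probability: c̃₂ < c̃₁ and H₂(c̃₂) > H₁(c̃₁). -/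
theorem concealment_threshold_comparative_statics
    (G H1 H2 : ℝ → ℝ) (cl cu alphaG gamma betaE c1 c2 : ℝ)
    (hGcont : Continuous G) (hGmono : StrictMono G) (hG0 : G 0 = 0)
    (hH1cont : ContinuousOn H1 (Set.Icc cl cu))
    (hH1mono : StrictMonoOn H1 (Set.Icc cl cu))
    (hH2cont : ContinuousOn H2 (Set.Icc cl cu))
    (hH2mono : StrictMonoOn H2 (Set.Icc cl cu))
    (hH1l : H1 cl = 0) (hH2l : H2 cl = 0)
    (hH1range : ∀ c ∈ Set.Icc cl cu, H1 c ∈ Set.Icc (0:ℝ) 1)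
    (hH2range : ∀ c ∈ Set.Icc cl cu, H2 c ∈ Set.Icc (0:ℝ) 1)
    (hFOSD : ∀ c ∈ Set.Ioo cl cu, H1 c < H2 c)
    (hcl : 0 ≤ cl) (hclα : cl < alphaG) (hαcu : alphaG < cu) (hα1 : alphaG < 1)
    (hγ : gamma ∈ Set.Ioo (0:ℝ) 1) (hβ : 0 < betaE)
    (hc1 : c1 ∈ Set.Ioo cl alphaG)
    (heq1 : G (gamma * H1 c1 * betaE / (gamma * H1 c1 + 1 - gamma)) = alphaG - c1)
    (huniq1 : ∀ c ∈ Set.Ioo cl alphaG,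
      G (gamma * H1 c * betaE / (gamma * H1 c + 1 - gamma)) = alphaG - c → c = c1)
    (hc2 : c2 ∈ Set.Ioo cl alphaG)
    (heq2 : G (gamma * H2 c2 * betaE / (gamma * H2 c2 + 1 - gamma)) = alphaG - c2)
    (huniq2 : ∀ c ∈ Set.Ioo cl alphaG,
      G (gamma * H2 c * betaE / (gamma * H2 c + 1 - gamma)) = alphaG - c → c = c2) :
    c2 < c1 ∧ H1 c1 < H2 c2 := by
  obtain ⟨hγ0, hγ1⟩ := hγ
  have key : ∀ x y : ℝ, 0 ≤ x → x < y →
      gamma * x * betaE / (gamma * x + 1 - gamma) <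
      gamma * y * betaE / (gamma * y + 1 - gamma) := by
    intro x y hx hxy
    have hdx : 0 < gamma * x + 1 - gamma := by nlinarith
    have hdy : 0 < gamma * y + 1 - gamma := by nlinarith
    rw [div_lt_div_iff₀ hdx hdy]
    nlinarith [mul_pos (mul_pos hγ0 hβ) (mul_pos (sub_pos.mpr hγ1) (sub_pos.mpr hxy))]
  -- memberships
  have hm1 : c1 ∈ Set.Icc cl cu := ⟨hc1.1.le, (hc1.2.trans hαcu).le⟩
  have hm2 : c2 ∈ Set.Icc cl cu := ⟨hc2.1.le, (hc2.2.trans hαcu).le⟩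
  have hI2 : c2 ∈ Set.Ioo cl cu := ⟨hc2.1, hc2.2.trans hαcu⟩
  have h10 : (0:ℝ) ≤ H1 c1 := (hH1range c1 hm1).1
  have h20 : (0:ℝ) ≤ H2 c2 := (hH2range c2 hm2).1
  have h120 : (0:ℝ) ≤ H1 c2 := (hH1range c2 hm2).1
  -- aux: φ comparison transfers back
  have back : ∀ x y : ℝ, 0 ≤ x → 0 ≤ y →
      gamma * x * betaE / (gamma * x + 1 - gamma) <
      gamma * y * betaE / (gamma * y + 1 - gamma) → x < y := by
    intro x y hx hy h
    by_contra hc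
    push_neg at hc
    rcases eq_or_lt_of_le hc with h' | h'
    · rw [h'] at h; exact lt_irrefl _ h
    · exact absurd (key y x hy h') (not_lt.mpr h.le)
  have hlt : c2 < c1 := by
    by_contra hcon
    push_neg at hcon
    -- c1 ≤ c2, so αG - c2 ≤ αG - c1
    have hGle : G (gamma * H2 c2 * betaE / (gamma * H2 c2 + 1 - gamma)) ≤
        G (gamma * H1 c1 * betaE / (gamma * H1 c1 + 1 - gamma)) := by
      rw [heq1, heq2]; linarith
    have hφle := hGmono.le_iff_le.mp hGle
    have h21 : H2 c2 ≤ H1 c1 := by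
      by_contra hc
      push_neg at hc
      exact absurd (key _ _ h10 hc) (not_lt.mpr hφle)
    have : H1 c1 ≤ H1 c2 := hH1mono.monotoneOn hm1 hm2 hcon
    have := hFOSD c2 hI2
    linarith
  refine ⟨hlt, ?_⟩
  have hGlt : G (gamma * H1 c1 * betaE / (gamma * H1 c1 + 1 - gamma)) <
      G (gamma * H2 c2 * betaE / (gamma * H2 c2 + 1 - gamma)) := by
    rw [heq1, heq2]; linarith
  exact back _ _ h10 h20 (hGmono.lt_iff_lt.mp hGlt)
end

section
/- With q' = κq/(κq + 1−q), q ∈ (0,1), κ ∈ (0,1), h ∈ [0,1), P_rev = (κq+1−q)(1−h), and P_tot = h + P_rev, the identity P_tot = 1 − ((q − q')/(1 − q))·P_rev holds. -/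
/-- Proposition 4: total repression can be recovered from
revealed repression and public opinion:
P_tot = 1 − ((q − q')/(1 − q))·P_rev. -/
theorem total_repression_from_observables
    (q kappa h q' : ℝ)
    (hq : q ∈ Set.Ioo (0:ℝ) 1) (hκ : kappa ∈ Set.Ioo (0:ℝ) 1)
    (hh : h ∈ Set.Ico (0:ℝ) 1)
    (hq' : q' = kappa * q / (kappa * q + 1 - q)) :
    h + (kappa * q + 1 - q) * (1 - h)
      = 1 - (q - q') / (1 - q) * ((kappa * q + 1 - q) * (1 - h)) := by
  obtain ⟨hq0, hq1⟩ := hq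
  obtain ⟨hk0, hk1⟩ := hκ
  have hd : kappa * q + 1 - q ≠ 0 := by nlinarith
  have h1q : (1:ℝ) - q ≠ 0 := by linarith
  subst hq'
  field_simp
  ring
end
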